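/- arXiv:math/0101223 — 4 statements merged into one kernel-verified Lean document; each statement's English description precedes it below -/
import Mathlib

section
/- The Schrödinger representation φ_n of the finite Heisenberg group H_n on V_n = Map(ℤ/n, ℂ) is irreducible: any H_n-invariant subspace of V_n is either 0 or all of V_n. -/
/-! The finite Heisenberg group `H_n = μ_n × ℤ/n × Hom(ℤ/n, ℂˣ)`. -/

/-- The underlying set of the finite Heisenberg group:
`μ_n × (ℤ/n) × Hom(ℤ/n, ℂˣ)`, where `μ_n = rootsOfUnity n ℂ` and characters of `ℤ/n`
are additive characters with values in `ℂˣ`. -/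
abbrev Heis (n : ℕ) : Type :=
  (rootsOfUnity n ℂ) × ZMod n × AddChar (ZMod n) ℂˣ

/-- The value of any character of `ℤ/n` is an `n`-th root of unity. -/
theorem addChar_val_mem (n : ℕ) (α : AddChar (ZMod n) ℂˣ) (a : ZMod n) :
    α a ∈ rootsOfUnity n ℂ := by
  rw [mem_rootsOfUnity, ← AddChar.map_nsmul_eq_pow, nsmul_eq_mul, ZMod.natCast_self, zero_mul,
    AddChar.map_zero_eq_one]

/-- The Heisenberg multiplication `(λ; a, α)·(λ'; a', α') = (λλ'α'(a); a + a', αα')`. -/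
def heisMul {n : ℕ} (x y : Heis n) : Heis n :=
  (x.1 * y.1 * ⟨y.2.2 x.2.1, addChar_val_mem n y.2.2 x.2.1⟩, x.2.1 + y.2.1, x.2.2 * y.2.2)

/-- The identity element `(1; 0, 𝟙)`. -/
def heisOne {n : ℕ} : Heis n := (1, 0, 1)

/-- The inverse `(λ; a, α)⁻¹ = (λ⁻¹ α(a); -a, α⁻¹)`. -/
def heisInv {n : ℕ} (x : Heis n) : Heis n :=
  (x.1⁻¹ * ⟨x.2.2 x.2.1, addChar_val_mem n x.2.2 x.2.1⟩, -x.2.1, x.2.2⁻¹)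


/-- The Schrödinger representation of `H_n` on `V_n = Map(ℤ/n, ℂ)`:
`(φ_n(λ; a, α)f)(x) = λ·α(x)·f(x + a)`. -/
def schroedinger {n : ℕ} (g : Heis n) : (ZMod n → ℂ) →ₗ[ℂ] (ZMod n → ℂ) where
  toFun f := fun x => ((g.1 : ℂˣ) : ℂ) * ((g.2.2 x : ℂˣ) : ℂ) * f (x + g.2.1)
  map_add' f₁ f₂ := by funext x; simp [mul_add]
  map_smul' c f := by funext x; simp [Pi.smul_apply, smul_eq_mul]; ring

/-!
The elements `(1; 0, α)` act by multiplication with the characters of `ℤ/n`, and these span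
`V_n`; so an invariant subspace `W` is stable under multiplication by every function. If
`f ∈ W` does not vanish at `x₀`, multiplying by `δ_{x₀} / f(x₀)` puts `δ_{x₀}` in `W`, and the
translations `(1; a, 𝟙)` then give every `δ_y`, which span `V_n`.
-/

namespace AddChar

variable {A M : Type*} [AddGroup A] [Monoid M]

def toUnits (ψ : AddChar A M) : AddChar A Mˣ :=
  toMonoidHomEquiv.symm ψ.toMonoidHom.toHomUnits

@[simp]
lemma coe_toUnits_apply (ψ : AddChar A M) (a : A) : (ψ.toUnits a : M) = ψ a := rfl

end AddChar

namespace Submodule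

section Field

variable {K α : Type*} [Field K] {S : Submodule K (α → K)}

lemma pi_single_mem_of_mul_mem [DecidableEq α] (hmul : ∀ h f, f ∈ S → h * f ∈ S)
    {f : α → K} (hf : f ∈ S) {x : α} (hx : f x ≠ 0) : Pi.single x 1 ∈ S := by
  convert hmul (Pi.single x (f x)⁻¹) f hf using 1
  ext y
  rcases eq_or_ne y x with rfl | hy
  · simp [hx]
  · simp [hy]

lemma eq_top_of_forall_pi_single_mem [Finite α] [DecidableEq α]
    (h : ∀ x, Pi.single x 1 ∈ S) : S = ⊤ := by
  rw [eq_top_iff, ← (Pi.basisFun K α).span_eq, span_le]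
  rintro _ ⟨x, rfl⟩
  simpa using h x

lemma eq_bot_or_eq_top_of_mul_mem_of_comp_add_mem [AddGroup α] [Finite α]
    (hmul : ∀ h f, f ∈ S → h * f ∈ S) (htrans : ∀ a f, f ∈ S → (fun x => f (x + a)) ∈ S) :
    S = ⊥ ∨ S = ⊤ := by
  classical
  refine or_iff_not_imp_left.2 fun hS => eq_top_of_forall_pi_single_mem fun y => ?_
  obtain ⟨f, hf, hf0⟩ := S.ne_bot_iff.1 hS
  obtain ⟨x, hx⟩ := Function.ne_iff.1 hf0
  convert htrans (-y + x) _ (pi_single_mem_of_mul_mem hmul hf hx) using 1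
  ext z
  simp [Pi.single_apply, ← add_assoc, add_neg_eq_zero]

end Field

lemma mul_mem_of_forall_addChar_mul_mem {α : Type*} [AddCommGroup α] [Finite α]
    {S : Submodule ℂ (α → ℂ)} (hchar : ∀ (ψ : AddChar α ℂ) f, f ∈ S → ⇑ψ * f ∈ S)
    (h : α → ℂ) {f : α → ℂ} (hf : f ∈ S) : h * f ∈ S := by
  have hspan : (⊤ : Submodule ℂ (α → ℂ)) ≤ S.comap (LinearMap.mulRight ℂ f) := by
    rw [← (AddChar.complexBasis α).span_eq, span_le]
    rintro _ ⟨ψ, rfl⟩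
    simpa using hchar ψ f hf
  exact hspan trivial

end Submodule

lemma schroedinger_one_zero_apply {n : ℕ} (α : AddChar (ZMod n) ℂˣ) (f : ZMod n → ℂ) :
    schroedinger (1, 0, α) f = (fun x => (α x : ℂ)) * f := by
  ext x
  simp [schroedinger]

lemma schroedinger_one_one_apply {n : ℕ} (a : ZMod n) (f : ZMod n → ℂ) :
    schroedinger (1, a, 1) f = fun x => f (x + a) := by
  ext x
  simp [schroedinger]

/-- The Schrödinger representation of `H_n` on `V_n = Map(ℤ/n, ℂ)` is
irreducible: every `H_n`-invariant subspace of `V_n` is `0` or all of `V_n`. -/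
theorem schroedinger_irreducible (n : ℕ) [NeZero n]
    (W : Submodule ℂ (ZMod n → ℂ))
    (hW : ∀ (g : Heis n) (f : ZMod n → ℂ), f ∈ W → schroedinger g f ∈ W) :
    W = ⊥ ∨ W = ⊤ := by
  refine W.eq_bot_or_eq_top_of_mul_mem_of_comp_add_mem
    (W.mul_mem_of_forall_addChar_mul_mem fun ψ f hf => ?_) fun a f hf => ?_
  · simpa [schroedinger_one_zero_apply] using hW (1, 0, ψ.toUnits) f hf
  · simpa [schroedinger_one_one_apply] using hW (1, a, 1) f hf
end

section
/- For every pair (ξ, x) ∈ Hom(ℤ/n, ℂˣ) × ℤ/n, the element A_(ξ,x) := Σ_{i=0}^{n-1} ξ(i) e_i^∨ ⊗ e_{i+x} of End(V_n) is a nonzero simultaneous eigenvector for the adjoint action of ℤ/n × Hom(ℤ/n, ℂˣ): conjugation by φ_n(1; a, α) multiplies A_(ξ,x) by ξ(a)·α(x). -/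
open scoped BigOperators

/-- The rank one endomorphism `e_i^∨ ⊗ e_j` of `V_n = Map(ℤ/n, ℂ)`,
sending `f` to `f(i)·e_j`. -/
def rankOne {n : ℕ} (i j : ZMod n) : (ZMod n → ℂ) →ₗ[ℂ] (ZMod n → ℂ) where
  toFun f := fun y => if y = j then f i else 0
  map_add' f g := by funext y; by_cases h : y = j <;> simp [h]
  map_smul' c f := by funext y; by_cases h : y = j <;> simp [h]

/-- The element `A_(ξ,x) = Σ_{i} ξ(i) e_i^∨ ⊗ e_{i+x}` of `End(V_n)`. -/
noncomputable def Aelt {n : ℕ} [NeZero n] (ξ : AddChar (ZMod n) ℂˣ) (x : ZMod n) :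
    (ZMod n → ℂ) →ₗ[ℂ] (ZMod n → ℂ) :=
  ∑ i : ZMod n, ((ξ i : ℂˣ) : ℂ) • rankOne i (i + x)

/-! In the basis `e_i`, `A_(ξ,x)` is the weighted shift `f ↦ (y ↦ ξ(y - x) f(y - x))`.
Conjugating it by `φ_n(1; a, α)` translates the weight by `a`, which contributes the factor
`ξ(a)` because `ξ` is a character, and multiplies the result by `α(y) α(x - y) = α(x)`. -/

section

variable {n : ℕ}

theorem units_val_addChar_add (α : AddChar (ZMod n) ℂˣ) (s t : ZMod n) :
    ((α (s + t) : ℂˣ) : ℂ) = α s * α t := by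
  rw [AddChar.map_add_eq_mul, Units.val_mul]

theorem schroedinger_apply (g : Heis n) (f : ZMod n → ℂ) (y : ZMod n) :
    schroedinger g f y = ((g.1 : ℂˣ) : ℂ) * ((g.2.2 y : ℂˣ) : ℂ) * f (y + g.2.1) :=
  rfl

theorem schroedinger_heisInv_apply (a : ZMod n) (α : AddChar (ZMod n) ℂˣ)
    (f : ZMod n → ℂ) (y : ZMod n) :
    schroedinger (heisInv ((1 : rootsOfUnity n ℂ), a, α)) f y = α (a - y) * f (y - a) := by
  simp [schroedinger_apply, heisInv, AddChar.inv_apply, sub_eq_add_neg, units_val_addChar_add]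

theorem Aelt_apply [NeZero n] (ξ : AddChar (ZMod n) ℂˣ) (x : ZMod n)
    (f : ZMod n → ℂ) (y : ZMod n) :
    Aelt ξ x f y = ξ (y - x) * f (y - x) := by
  simp only [Aelt, LinearMap.sum_apply, LinearMap.smul_apply, Finset.sum_apply, Pi.smul_apply,
    smul_eq_mul, rankOne, LinearMap.coe_mk, AddHom.coe_mk, ← sub_eq_iff_eq_add,
    mul_ite, mul_zero, Finset.sum_ite_eq, Finset.mem_univ, if_true]

theorem Aelt_ne_zero [NeZero n] (ξ : AddChar (ZMod n) ℂˣ) (x : ZMod n) : Aelt ξ x ≠ 0 := by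
  intro h
  have := Aelt_apply ξ x (fun _ => 1) x
  simp [h] at this

end

/-- For every `(ξ, x)`, the element `A_(ξ,x) = Σ_i ξ(i) e_i^∨ ⊗ e_{i+x}`
is a nonzero simultaneous eigenvector for the adjoint action of `ℤ/n × Hom(ℤ/n, ℂˣ)` on
`End(V_n)`: conjugation by `φ_n(1; a, α)` multiplies `A_(ξ,x)` by `ξ(a)·α(x)`. -/
theorem Aelt_is_eigenvector (n : ℕ) [NeZero n]
    (ξ : AddChar (ZMod n) ℂˣ) (x : ZMod n) :
    Aelt ξ x ≠ 0 ∧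
    ∀ (a : ZMod n) (α : AddChar (ZMod n) ℂˣ),
      (schroedinger ((1 : rootsOfUnity n ℂ), a, α)) ∘ₗ (Aelt ξ x) ∘ₗ
        (schroedinger (heisInv ((1 : rootsOfUnity n ℂ), a, α))) =
      (((ξ a : ℂˣ) : ℂ) * ((α x : ℂˣ) : ℂ)) • Aelt ξ x := by
  refine ⟨Aelt_ne_zero ξ x, fun a α => LinearMap.ext fun f => funext fun y => ?_⟩
  have hα : ((α y : ℂˣ) : ℂ) * α (x - y) = α x := by
    rw [← units_val_addChar_add, add_sub_cancel]
  rw [LinearMap.comp_apply, LinearMap.comp_apply, schroedinger_apply, Aelt_apply,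
    schroedinger_heisInv_apply, show y + a - x = y - x + a by ring, add_sub_cancel_right,
    show a - (y - x + a) = x - y by ring, units_val_addChar_add ξ]
  simp only [LinearMap.smul_apply, Pi.smul_apply, smul_eq_mul, Aelt_apply,
    OneMemClass.coe_one, Units.val_one, one_mul]
  linear_combination (ξ (y - x) * ξ a * f (y - x) : ℂ) * hα
end

section
/- Let κ : A → GL(V) be a finite-dimensional complex representation of a finite abelian group A, and suppose V carries a nondegenerate A-invariant symmetric bilinear form Q (so κ is self-dual via Q). Then κ extends to a representation of the dihedral group μ₂ ⋉ A (with μ₂ acting on A by inversion) in which the generator of μ₂ acts by a linear map J with Q(Jv, Jw) = Q(v, w) and J ∘ κ(a) ∘ J⁻¹ = κ(-a) for all a ∈ A. -/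
open Module Function

namespace SelfDualAux

variable {V : Type*} [AddCommGroup V] [Module ℂ V] [FiniteDimensional ℂ V]
variable (Q : V →ₗ[ℂ] V →ₗ[ℂ] ℂ)

/-- Nondegeneracy of the pairing between two subspaces. -/
def QC (P R : Submodule ℂ V) : Prop :=
  (∀ x ∈ P, (∀ y ∈ R, Q x y = 0) → x = 0) ∧ (∀ y ∈ R, (∀ x ∈ P, Q y x = 0) → y = 0)

lemma QC.symm {P R : Submodule ℂ V} (h : QC Q P R) : QC Q R P := ⟨h.2, h.1⟩

/-- The pairing map `R →ₗ Dual P`. -/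
noncomputable def qdual (P R : Submodule ℂ V) : R →ₗ[ℂ] Module.Dual ℂ P :=
  Q.compl₁₂ R.subtype P.subtype

lemma qdual_apply (P R : Submodule ℂ V) (y : R) (x : P) :
    qdual Q P R y x = Q (y : V) (x : V) := rfl

lemma qdual_injective {P R : Submodule ℂ V} (h : QC Q P R) :
    Function.Injective (qdual Q P R) := by
  intro y y' hyy
  have h0 : qdual Q P R (y - y') = 0 := by rw [map_sub, hyy, sub_self]
  have h1 : ((y - y' : R) : V) = 0 := by
    refine h.2 _ (y - y').2 (fun x hx => ?_)
    have := congrArg (fun f => f (⟨x, hx⟩ : P)) h0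
    simpa [qdual_apply] using this
  have : (y : V) = (y' : V) := by
    have := sub_eq_zero.mp (by simpa using h1)
    exact this
  exact Subtype.ext this

lemma qc_finrank_le {P R : Submodule ℂ V} (h : QC Q P R) :
    finrank ℂ R ≤ finrank ℂ P := by
  have := LinearMap.finrank_le_finrank_of_injective (qdual_injective Q h)
  rwa [Subspace.dual_finrank_eq] at this

lemma qc_finrank {P R : Submodule ℂ V} (h : QC Q P R) (h' : QC Q R P) :
    finrank ℂ R = finrank ℂ (Module.Dual ℂ P) := by
  rw [Subspace.dual_finrank_eq]
  exact le_antisymm (qc_finrank_le Q h) (qc_finrank_le Q h')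

/-- The pairing as a linear equivalence `R ≃ₗ Dual P`. -/
noncomputable def qdualEquiv (P R : Submodule ℂ V) (h : QC Q P R) (h' : QC Q R P) :
    R ≃ₗ[ℂ] Module.Dual ℂ P :=
  (qdual Q P R).linearEquivOfInjective (qdual_injective Q h) (qc_finrank Q h h')

lemma qdualEquiv_apply (P R : Submodule ℂ V) (h : QC Q P R) (h' : QC Q R P) (y : R) (x : P) :
    qdualEquiv Q P R h h' y x = Q (y : V) (x : V) := rfl

lemma toDual_symm {M : Type*} [AddCommGroup M] [Module ℂ M] {n : ℕ}
    (b : Basis (Fin n) ℂ M) (x y : M) : b.toDual x y = b.toDual y x := by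
  have e : ∀ x y : M, b.toDual x y = ∑ j, b.repr y j * b.repr x j := by
    intro x y
    conv_lhs => rw [← b.sum_repr y]
    rw [map_sum]
    refine Finset.sum_congr rfl fun j _ => ?_
    rw [map_smul, Basis.toDual_eq_repr, smul_eq_mul]
  rw [e, e]
  exact Finset.sum_congr rfl fun j _ => mul_comm _ _

/-- The canonical equivalence `P ≃ₗ R` coming from the pairing and a choice of basis of `P`. -/
noncomputable def uEquiv (P R : Submodule ℂ V) (h : QC Q P R) (h' : QC Q R P) :
    P ≃ₗ[ℂ] R :=
  (Module.finBasis ℂ P).toDualEquiv.trans (qdualEquiv Q P R h h').symm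

lemma uEquiv_q (P R : Submodule ℂ V) (h : QC Q P R) (h' : QC Q R P) (x p : P) :
    Q (uEquiv Q P R h h' x : V) (p : V) = Q (uEquiv Q P R h h' p : V) (x : V) := by
  have key : ∀ z w : P, Q (uEquiv Q P R h h' z : V) (w : V) = (Module.finBasis ℂ P).toDual z w := by
    intro z w
    have h1 : qdualEquiv Q P R h h' (uEquiv Q P R h h' z) = (Module.finBasis ℂ P).toDualEquiv z := by
      simp only [uEquiv, LinearEquiv.trans_apply]
      exact (qdualEquiv Q P R h h').apply_symm_apply _
    calc Q (uEquiv Q P R h h' z : V) (w : V)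
        = qdualEquiv Q P R h h' (uEquiv Q P R h h' z) w := rfl
      _ = (Module.finBasis ℂ P).toDualEquiv z w := by rw [h1]
      _ = (Module.finBasis ℂ P).toDual z w := rfl
  rw [key x p, key p x, toDual_symm]

open Classical in
/-- The swap map on a dual pair of subspaces. -/
noncomputable def Phi (P R : Submodule ℂ V) : P →ₗ[ℂ] V :=
  if h : QC Q P R ∧ QC Q R P ∧ P ≠ R then
    if WellOrderingRel P R then
      R.subtype ∘ₗ (uEquiv Q P R h.1 h.2.1 : P →ₗ[ℂ] R)
    else
      R.subtype ∘ₗ ((uEquiv Q R P h.2.1 h.1).symm : P →ₗ[ℂ] R)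
  else P.subtype

lemma phi_mem (P R : Submodule ℂ V) (hP : QC Q P R) (hR : QC Q R P) (x : P) :
    (Phi Q P R x : V) ∈ R := by
  unfold Phi
  by_cases hE : P = R
  · rw [dif_neg (by simp [hE])]
    exact hE ▸ x.2
  · rw [dif_pos ⟨hP, hR, hE⟩]
    by_cases h2 : WellOrderingRel P R
    · rw [if_pos h2]; exact SetLike.coe_mem _
    · rw [if_neg h2]; exact SetLike.coe_mem _

lemma phi_inv (P R : Submodule ℂ V) (hP : QC Q P R) (hR : QC Q R P) (x : P) (y : R)
    (hxy : (y : V) = Phi Q P R x) : (Phi Q R P y : V) = x := by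
  by_cases hE : P = R
  · subst hE
    unfold Phi at hxy ⊢
    rw [dif_neg (by simp)] at hxy ⊢
    simpa using hxy
  · have hE' : R ≠ P := fun h => hE h.symm
    rcases trichotomous_of WellOrderingRel P R with h2 | h2 | h2
    · have hA : ¬ WellOrderingRel R P := asymm h2
      unfold Phi at hxy ⊢
      rw [dif_pos ⟨hP, hR, hE⟩, if_pos h2] at hxy
      rw [dif_pos ⟨hR, hP, hE'⟩, if_neg hA]
      simp only [LinearMap.comp_apply, Submodule.subtype_apply, LinearEquiv.coe_coe] at hxy ⊢
      have hy : y = uEquiv Q P R hP hR x := Subtype.ext hxy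
      rw [hy]
      show (((uEquiv Q P R hP hR).symm ((uEquiv Q P R hP hR) x) : P) : V) = (x : V)
      rw [LinearEquiv.symm_apply_apply]
    · exact absurd h2 hE
    · have hA : ¬ WellOrderingRel P R := asymm h2
      unfold Phi at hxy ⊢
      rw [dif_pos ⟨hP, hR, hE⟩, if_neg hA] at hxy
      rw [dif_pos ⟨hR, hP, hE'⟩, if_pos h2]
      simp only [LinearMap.comp_apply, Submodule.subtype_apply, LinearEquiv.coe_coe] at hxy ⊢
      have hy : y = (uEquiv Q R P hR hP).symm x := Subtype.ext hxy
      rw [hy]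
      show (((uEquiv Q R P hR hP) ((uEquiv Q R P hR hP).symm x) : P) : V) = (x : V)
      rw [LinearEquiv.apply_symm_apply]

lemma phi_Q (P R : Submodule ℂ V) (hP : QC Q P R) (hR : QC Q R P)
    (hs : ∀ v w : V, Q v w = Q w v) (x : P) (y : R) :
    Q (Phi Q P R x : V) (Phi Q R P y : V) = Q (x : V) (y : V) := by
  by_cases hE : P = R
  · subst hE
    unfold Phi
    rw [dif_neg (by simp)]
    rfl
  · have hE' : R ≠ P := fun h => hE h.symm
    rcases trichotomous_of WellOrderingRel P R with h2 | h2 | h2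
    · have hA : ¬ WellOrderingRel R P := asymm h2
      unfold Phi
      rw [dif_pos ⟨hP, hR, hE⟩, if_pos h2, dif_pos ⟨hR, hP, hE'⟩, if_neg hA]
      simp only [LinearMap.comp_apply, Submodule.subtype_apply, LinearEquiv.coe_coe]
      show Q ((uEquiv Q P R hP hR x : R) : V) (((uEquiv Q P R hP hR).symm y : P) : V)
          = Q (x : V) (y : V)
      rw [uEquiv_q Q P R hP hR x ((uEquiv Q P R hP hR).symm y),
        LinearEquiv.apply_symm_apply]
      exact hs _ _
    · exact absurd h2 hE
    · have hA : ¬ WellOrderingRel P R := asymm h2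
      unfold Phi
      rw [dif_pos ⟨hP, hR, hE⟩, if_neg hA, dif_pos ⟨hR, hP, hE'⟩, if_pos h2]
      simp only [LinearMap.comp_apply, Submodule.subtype_apply, LinearEquiv.coe_coe]
      show Q (((uEquiv Q R P hR hP).symm x : R) : V) ((uEquiv Q R P hR hP y : P) : V)
          = Q (x : V) (y : V)
      rw [hs]
      rw [uEquiv_q Q R P hR hP y ((uEquiv Q R P hR hP).symm x),
        LinearEquiv.apply_symm_apply]

end SelfDualAux

open SelfDualAux DirectSum in
/-- Let `κ : A → GL(V)` be a finite-dimensional complex representation of a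
finite abelian group `A`, self-dual via a nondegenerate `A`-invariant symmetric bilinear
form `Q`.  Then `κ` extends to a representation of the dihedral group `μ₂ ⋉ A` (with `μ₂`
acting on `A` by inversion): there is a linear automorphism `J` of `V` with `J² = 1`,
preserving `Q`, and satisfying `J ∘ κ(a) ∘ J⁻¹ = κ(-a)` (written multiplicatively:
`κ(a⁻¹)`) for all `a ∈ A`. -/
theorem selfdual_rep_extends_to_dihedral
    {A : Type*} [CommGroup A] [Fintype A]
    {V : Type*} [AddCommGroup V] [Module ℂ V] [FiniteDimensional ℂ V]
    (κ : A →* (V ≃ₗ[ℂ] V))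
    (Q : V →ₗ[ℂ] V →ₗ[ℂ] ℂ)
    (hsymm : ∀ v w : V, Q v w = Q w v)
    (hnondeg : ∀ v : V, (∀ w : V, Q v w = 0) → v = 0)
    (hinv : ∀ (a : A) (v w : V), Q (κ a v) (κ a w) = Q v w) :
    ∃ J : V ≃ₗ[ℂ] V,
      (∀ v : V, J (J v) = v) ∧
      (∀ v w : V, Q (J v) (J w) = Q v w) ∧
      (∀ (a : A) (v : V), J (κ a (J.symm v)) = κ a⁻¹ v) := by
  classical
  -- the representation as a family of endomorphisms
  let fm : A →* Module.End ℂ V := LinearEquiv.automorphismGroup.toLinearMapMonoidHom.comp κ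
  have hfm : ∀ (a : A) (v : V), fm a v = κ a v := fun a v => rfl
  -- each κ a is semisimple
  have hpow : ∀ a : A, fm a ^ Fintype.card A = 1 := by
    intro a
    rw [← map_pow, pow_card_eq_one, map_one]
  have hsq : Squarefree (Polynomial.X ^ Fintype.card A - 1 : Polynomial ℂ) := by
    have := Polynomial.separable_X_pow_sub_C (F := ℂ) (n := Fintype.card A) 1
      (by exact_mod_cast Nat.cast_ne_zero.mpr Fintype.card_ne_zero) one_ne_zero
    rw [Polynomial.C_1] at this
    exact this.squarefree
  have hsemi : ∀ a : A, (fm a).IsFinitelySemisimple := by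
    intro a
    refine (Module.End.isSemisimple_of_squarefree_aeval_eq_zero hsq ?_).isFinitelySemisimple
    rw [map_sub, map_pow, Polynomial.aeval_X, map_one, hpow, sub_self]
  have heig : ∀ (a : A) (μ : ℂ), (fm a).maxGenEigenspace μ = (fm a).eigenspace μ :=
    fun a μ => (hsemi a).maxGenEigenspace_eq_eigenspace μ
  -- the simultaneous eigenspaces
  let W : (A → ℂ) → Submodule ℂ V := fun χ => ⨅ a : A, (fm a).maxGenEigenspace (χ a)
  have hmem : ∀ (χ : A → ℂ) (v : V), v ∈ W χ ↔ ∀ a : A, κ a v = χ a • v := by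
    intro χ v
    rw [Submodule.mem_iInf]
    refine forall_congr' fun a => ?_
    rw [heig, Module.End.mem_eigenspace_iff]
    exact Iff.rfl
  have hcomm : Pairwise fun a b : A => Commute (fm a) (fm b) := by
    intro a b _
    show fm a * fm b = fm b * fm a
    rw [← map_mul, ← map_mul, mul_comm a b]
  have hTop : ⨆ χ : A → ℂ, W χ = ⊤ :=
    Module.End.iSup_iInf_maxGenEigenspace_eq_top_of_iSup_maxGenEigenspace_eq_top_of_commute
      (fun a => fm a) hcomm (fun a => Module.End.iSup_maxGenEigenspace_eq_top (fm a))
  have hInd : iSupIndep W := by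
    refine Module.End.independent_iInf_maxGenEigenspace_of_forall_mapsTo (fun a => fm a) ?_
    intro i j φ
    rcases eq_or_ne j i with rfl | hij
    · exact Module.End.mapsTo_maxGenEigenspace_of_comm rfl φ
    · exact Module.End.mapsTo_maxGenEigenspace_of_comm (hcomm hij.symm).symm φ
  -- inversion on weights
  let inve : (A → ℂ) → A → ℂ := fun χ a => χ a⁻¹
  have hinvinv : ∀ χ : A → ℂ, inve (inve χ) = χ := by
    intro χ; funext a; simp [inve]
  have hWind : ∀ χ : A → ℂ, W (inve (inve χ)) = W χ := fun χ => by rw [hinvinv]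
  -- basic unit property of weights
  have hUnit : ∀ (χ : A → ℂ) (v : V), v ∈ W χ → v ≠ 0 → ∀ a : A, χ a * χ a⁻¹ = 1 := by
    intro χ v hv hv0 a
    have h1 : κ a (κ a⁻¹ v) = v := by
      have h2 : κ a * κ a⁻¹ = 1 := by rw [← map_mul, mul_inv_cancel, map_one]
      calc κ a (κ a⁻¹ v) = (κ a * κ a⁻¹) v := rfl
        _ = v := by rw [h2]; rfl
    rw [(hmem χ v).mp hv a⁻¹, map_smul, (hmem χ v).mp hv a, smul_smul] at h1
    have h3 : (χ a⁻¹ * χ a - 1) • v = 0 := by rw [sub_smul, one_smul, h1, sub_self]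
    rcases smul_eq_zero.mp h3 with h4 | h4
    · rw [mul_comm] at h4; linear_combination h4
    · exact absurd h4 hv0
  -- orthogonality of non-dual weight spaces
  have horth : ∀ χ ψ : A → ℂ, ψ ≠ inve χ → ∀ v ∈ W χ, ∀ w ∈ W ψ, Q v w = 0 := by
    intro χ ψ hne v hv w hw
    by_cases hv0 : v = 0
    · simp [hv0]
    by_cases hw0 : w = 0
    · simp [hw0]
    obtain ⟨a, ha⟩ : ∃ a : A, ψ a ≠ χ a⁻¹ := by
      by_contra hc
      push_neg at hc
      exact hne (funext hc)
    by_contra hQ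
    have h1 : Q v w = (χ a * ψ a) * Q v w := by
      conv_lhs => rw [← hinv a v w, (hmem χ v).mp hv a, (hmem ψ w).mp hw a]
      simp [smul_eq_mul]
      ring
    have h2 : χ a * ψ a = 1 := by
      have h5 : (χ a * ψ a - 1) * Q v w = 0 := by linear_combination -h1
      rcases mul_eq_zero.mp h5 with h | h
      · linear_combination h
      · exact absurd h hQ
    have h3 : χ a * χ a⁻¹ = 1 := hUnit χ v hv hv0 a
    have hχ0 : χ a ≠ 0 := left_ne_zero_of_mul_eq_one h2
    exact ha (mul_left_cancel₀ hχ0 (h2.trans h3.symm))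
  -- nondegeneracy of the pairing between dual weight spaces
  have hpairQ : ∀ (χ : A → ℂ) (v : V), v ∈ W χ → (∀ w ∈ W (inve χ), Q v w = 0) → v = 0 := by
    intro χ v hv h0
    refine hnondeg v fun w => ?_
    have hw : w ∈ ⨆ ψ : A → ℂ, W ψ := by rw [hTop]; exact Submodule.mem_top
    refine Submodule.iSup_induction (motive := fun w => Q v w = 0) W hw ?_ (map_zero _) ?_
    · intro ψ w' hw'
      by_cases hψ : ψ = inve χ
      · exact h0 w' (hψ ▸ hw')
      · exact horth χ ψ hψ v hv w' hw'
    · intro x y hx hy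
      rw [map_add, hx, hy, add_zero]
  have hCall : ∀ χ : A → ℂ, QC Q (W χ) (W (inve χ)) := by
    intro χ
    constructor
    · intro x hx h; exact hpairQ χ x hx h
    · intro y hy h
      refine hpairQ (inve χ) y hy fun w hw => ?_
      exact h w ((hWind χ) ▸ hw)
  have hCall' : ∀ χ : A → ℂ, QC Q (W (inve χ)) (W χ) := fun χ => (hCall χ).symm
  -- internal direct sum decomposition
  have hInternal : DirectSum.IsInternal W :=
    DirectSum.isInternal_submodule_of_iSupIndep_of_iSup_eq_top hInd hTop
  let E : (⨁ χ : A → ℂ, W χ) ≃ₗ[ℂ] V :=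
    LinearEquiv.ofBijective (DirectSum.coeLinearMap W) hInternal
  let Jlin : V →ₗ[ℂ] V :=
    (DirectSum.toModule ℂ (A → ℂ) V (fun χ => Phi Q (W χ) (W (inve χ)))) ∘ₗ (E.symm : V →ₗ[ℂ] (⨁ χ : A → ℂ, W χ))
  have hJcomp : ∀ (χ : A → ℂ) (x : V) (hx : x ∈ W χ),
      Jlin x = (Phi Q (W χ) (W (inve χ)) ⟨x, hx⟩ : V) := by
    intro χ x hx
    have hE : E.symm x = DirectSum.lof ℂ (A → ℂ) (fun χ => W χ) χ ⟨x, hx⟩ := by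
      apply E.injective
      rw [LinearEquiv.apply_symm_apply]
      show x = DirectSum.coeLinearMap W (DirectSum.lof ℂ (A → ℂ) (fun χ => W χ) χ ⟨x, hx⟩)
      rw [DirectSum.lof_eq_of, DirectSum.coeLinearMap_of]
    show DirectSum.toModule ℂ (A → ℂ) V (fun χ => Phi Q (W χ) (W (inve χ))) (E.symm x) = _
    rw [hE, DirectSum.toModule_lof]
  have hJmem : ∀ (χ : A → ℂ) (x : V) (hx : x ∈ W χ), Jlin x ∈ W (inve χ) := by
    intro χ x hx
    rw [hJcomp χ x hx]
    exact phi_mem Q (W χ) (W (inve χ)) (hCall χ) (hCall' χ) _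
  -- the involution property
  have hJJ : ∀ v : V, Jlin (Jlin v) = v := by
    intro v
    have hv : v ∈ ⨆ χ : A → ℂ, W χ := by rw [hTop]; exact Submodule.mem_top
    refine Submodule.iSup_induction (motive := fun v => Jlin (Jlin v) = v) W hv ?_ (by simp) ?_
    · intro χ x hx
      rw [hJcomp χ x hx]
      have h1 : (Phi Q (W χ) (W (inve χ)) ⟨x, hx⟩ : V) ∈ W (inve χ) :=
        phi_mem Q (W χ) (W (inve χ)) (hCall χ) (hCall' χ) _
      rw [hJcomp (inve χ) _ h1, hWind χ]
      exact phi_inv Q (W χ) (W (inve χ)) (hCall χ) (hCall' χ) ⟨x, hx⟩ ⟨_, h1⟩ rfl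
    · intro x y hx hy
      rw [map_add, map_add, hx, hy]
  -- Q preservation
  have hJQ : ∀ v w : V, Q (Jlin v) (Jlin w) = Q v w := by
    intro v w
    have hv : v ∈ ⨆ χ : A → ℂ, W χ := by rw [hTop]; exact Submodule.mem_top
    refine Submodule.iSup_induction
      (motive := fun v => ∀ w : V, Q (Jlin v) (Jlin w) = Q v w) W hv ?_ (by simp) ?_ w
    · intro χ v' hv' w'
      have hw : w' ∈ ⨆ ψ : A → ℂ, W ψ := by rw [hTop]; exact Submodule.mem_top
      refine Submodule.iSup_induction
        (motive := fun w' => Q (Jlin v') (Jlin w') = Q v' w') W hw ?_ (by simp) ?_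
      · intro ψ w'' hw''
        by_cases hψ : ψ = inve χ
        · subst hψ
          rw [hJcomp χ v' hv', hJcomp (inve χ) w'' hw'', hWind χ]
          exact phi_Q Q (W χ) (W (inve χ)) (hCall χ) (hCall' χ) hsymm ⟨v', hv'⟩ ⟨w'', hw''⟩
        · have hR : Q v' w'' = 0 := horth χ ψ hψ v' hv' w'' hw''
          have hL : Q (Jlin v') (Jlin w'') = 0 := by
            refine horth (inve χ) (inve ψ) ?_ _ (hJmem χ v' hv') _ (hJmem ψ w'' hw'')
            intro hc
            apply hψ
            have := congrArg inve hc
            rw [hinvinv, hinvinv] at this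
            exact this
          rw [hL, hR]
      · intro x y hx hy
        rw [map_add, map_add, hx, hy, map_add]
    · intro x y hx hy w'
      simp only [map_add, LinearMap.add_apply, hx w', hy w']
  -- equivariance
  have hJequi : ∀ (a : A) (v : V), Jlin (κ a (Jlin v)) = κ a⁻¹ v := by
    intro a v
    have hv : v ∈ ⨆ χ : A → ℂ, W χ := by rw [hTop]; exact Submodule.mem_top
    refine Submodule.iSup_induction
      (motive := fun v => Jlin (κ a (Jlin v)) = κ a⁻¹ v) W hv ?_ (by simp) ?_
    · intro χ x hx
      have h1 : Jlin x ∈ W (inve χ) := hJmem χ x hx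
      have h2 : κ a (Jlin x) = χ a⁻¹ • Jlin x := (hmem (inve χ) (Jlin x)).mp h1 a
      rw [h2, map_smul, hJJ]
      rw [(hmem χ x).mp hx a⁻¹]
    · intro x y hx hy
      rw [map_add, map_add, map_add, map_add, hx, hy]
  -- assemble the equivalence
  have hcomp : Jlin ∘ₗ Jlin = LinearMap.id := LinearMap.ext hJJ
  refine ⟨LinearEquiv.ofLinear Jlin Jlin hcomp hcomp, ?_, ?_, ?_⟩
  · intro v
    simpa using hJJ v
  · intro v w
    simpa using hJQ v w
  · intro a v
    simpa using hJequi a v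
end

section
/- Suppose a finitely generated group Γ acts by algebraic automorphisms on a reduced irreducible affine complex variety M, and some point of M has a Zariski dense Γ-orbit. Then the set of points of M whose Γ-orbit is NOT Zariski dense is contained in a countable union of proper closed subvarieties of M. -/
/-!
For a point `x` and a degree `n`, evaluate the polynomials of degree `≤ n` along the orbit of `x`.
The kernel of this linear map consists of the polynomials vanishing on the orbit, so it always
contains the polynomials vanishing on `M`, with equality for the point `x₀` with dense orbit;
hence its rank is maximal, equal to `r n` say, at `x₀`. The rank is `≥ r n` exactly when some
`r n × r n` minor `det (p i (γ j • x))` is nonzero, and since `Γ` acts by polynomial maps these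
minors are polynomials in `x`. A point whose orbit is not dense has a polynomial `p` vanishing on
its orbit but not on `M`, so its rank drops in degree `p.totalDegree` and all the corresponding
minors vanish at it, while `x₀` shows that none of these closed sets is all of `M`.
-/

open MvPolynomial
open Module Submodule Matrix

section LinearAlgebra

variable {K ι : Type*} [Field K] {r : ℕ}

theorem LinearIndependent.span_cols_eq_top {w : Fin r → ι → K} (hw : LinearIndependent K w) :
    span K (Set.range fun γ i => w i γ) = ⊤ := by
  by_contra hne
  obtain ⟨f, hf0, hf⟩ := exists_dual_map_eq_bot_of_lt_top (lt_top_iff_ne_top.2 hne) inferInstance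
  have hcol : ∀ γ, f (fun i => w i γ) = 0 := fun γ =>
    (mem_bot K).1 (hf ▸ mem_map_of_mem (subset_span ⟨γ, rfl⟩))
  have hsum : ∑ i, f (fun j => if i = j then 1 else 0) • w i = 0 := by
    funext γ
    have h := LinearMap.pi_apply_eq_sum_univ f fun i => w i γ
    rw [hcol γ] at h
    simpa only [Finset.sum_apply, Pi.smul_apply, smul_eq_mul, mul_comm, Pi.zero_apply] using h.symm
  have hcoef := Fintype.linearIndependent_iff.1 hw _ hsum
  exact hf0 (LinearMap.ext fun v => by
    rw [LinearMap.pi_apply_eq_sum_univ f v]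
    simp only [hcoef, smul_zero, Finset.sum_const_zero, LinearMap.zero_apply])

theorem linearIndependent_iff_exists_det_ne_zero (w : Fin r → ι → K) :
    LinearIndependent K w ↔ ∃ γ : Fin r → ι, (of fun i j => w i (γ j)).det ≠ 0 := by
  constructor
  · intro hw
    obtain ⟨κ, a, -, hspan, hind⟩ := exists_linearIndependent' K fun γ i => w i γ
    have : Fintype κ := @Fintype.ofFinite _ hind.finite
    have hcard : Fintype.card κ = r := by
      rw [← finrank_span_eq_card hind, hspan, hw.span_cols_eq_top, finrank_top, finrank_fin_fun]
    let e := Fintype.equivFinOfCardEq hcard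
    refine ⟨a ∘ e.symm, ?_⟩
    rw [← isUnit_iff_ne_zero, ← Matrix.isUnit_iff_isUnit_det,
      ← Matrix.linearIndependent_cols_iff_isUnit]
    exact hind.comp e.symm e.symm.injective
  · rintro ⟨γ, hdet⟩
    refine LinearIndependent.of_comp (LinearMap.funLeft K K γ) ?_
    exact Matrix.linearIndependent_rows_of_det_ne_zero hdet

theorem LinearMap.exists_linearIndependent_comp {V W : Type*} [AddCommGroup V] [Module K V]
    [AddCommGroup W] [Module K W] (f : V →ₗ[K] W) [FiniteDimensional K (range f)] :
    ∃ p : Fin (finrank K (range f)) → V, LinearIndependent K (f ∘ p) := by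
  let b := finBasis K (range f)
  choose p hp using fun i => LinearMap.mem_range.1 (b i).2
  refine ⟨p, ?_⟩
  rw [show f ∘ p = (range f).subtype ∘ b from funext hp]
  exact b.linearIndependent.map' (range f).subtype (ker_subtype _)

theorem LinearMap.le_finrank_range_of_linearIndependent_comp {V W : Type*} [AddCommGroup V]
    [Module K V] [AddCommGroup W] [Module K W] {f : V →ₗ[K] W} [FiniteDimensional K (range f)]
    {p : Fin r → V} (hp : LinearIndependent K (f ∘ p)) : r ≤ finrank K (range f) := by
  have hind : LinearIndependent K fun i => (⟨f (p i), mem_range_self f _⟩ : range f) :=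
    LinearIndependent.of_comp (range f).subtype hp
  simpa using hind.fintype_card_le_finrank

theorem LinearMap.finrank_range_lt_of_ker_lt {V W W' : Type*} [AddCommGroup V] [Module K V]
    [FiniteDimensional K V] [AddCommGroup W] [Module K W] [AddCommGroup W'] [Module K W']
    {f : V →ₗ[K] W} {g : V →ₗ[K] W'} (h : ker f < ker g) :
    finrank K (range g) < finrank K (range f) := by
  have := Submodule.finrank_lt_finrank_of_lt h
  have := f.finrank_range_add_finrank_ker
  have := g.finrank_range_add_finrank_ker
  omega

end LinearAlgebra

namespace MvPolynomial

section Evaluation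

variable {σ ι K : Type*} [CommSemiring K]

noncomputable def restrictTotalDegreeEval (n : ℕ) (x : ι → σ → K) :
    restrictTotalDegree σ K n →ₗ[K] (ι → K) :=
  LinearMap.pi fun i => (aeval (x i)).toLinearMap ∘ₗ (restrictTotalDegree σ K n).subtype

@[simp]
theorem restrictTotalDegreeEval_apply (n : ℕ) (x : ι → σ → K) (p : restrictTotalDegree σ K n)
    (i : ι) : restrictTotalDegreeEval n x p i = eval (x i) (p : MvPolynomial σ K) := by
  simp [restrictTotalDegreeEval]

theorem mem_ker_restrictTotalDegreeEval {n : ℕ} {x : ι → σ → K}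
    {p : restrictTotalDegree σ K n} :
    p ∈ LinearMap.ker (restrictTotalDegreeEval n x) ↔
      ∀ i, eval (x i) (p : MvPolynomial σ K) = 0 := by
  simp only [LinearMap.mem_ker, _root_.funext_iff, Pi.zero_apply, restrictTotalDegreeEval_apply]

end Evaluation

variable {σ ι ι' K : Type*} [Field K]

theorem finrank_range_restrictTotalDegreeEval_lt [Finite σ] {x : ι → σ → K} {y : ι' → σ → K}
    (hxy : ∀ q : MvPolynomial σ K, (∀ i, eval (x i) q = 0) → ∀ j, eval (y j) q = 0)
    {p : MvPolynomial σ K} (hpy : ∀ j, eval (y j) p = 0) (hpx : ¬ ∀ i, eval (x i) p = 0) :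
    finrank K (LinearMap.range (restrictTotalDegreeEval p.totalDegree y)) <
      finrank K (LinearMap.range (restrictTotalDegreeEval p.totalDegree x)) := by
  refine LinearMap.finrank_range_lt_of_ker_lt (SetLike.lt_iff_le_and_exists.2 ⟨?_, ?_⟩)
  · intro q hq
    rw [mem_ker_restrictTotalDegreeEval] at hq ⊢
    exact hxy q hq
  · refine ⟨⟨p, (mem_restrictTotalDegree _ _ _).2 le_rfl⟩, ?_, ?_⟩
    · exact mem_ker_restrictTotalDegreeEval.2 hpy
    · exact mt mem_ker_restrictTotalDegreeEval.1 hpx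

def orbitMinors (F : ι → σ → MvPolynomial σ K) (n r : ℕ) : Set (MvPolynomial σ K) :=
  {q | ∃ (γ : Fin r → ι) (p : Fin r → restrictTotalDegree σ K n),
    q = (of fun i j => bind₁ (F (γ j)) (p i : MvPolynomial σ K)).det}

theorem eval_det_bind₁ (F : ι → σ → MvPolynomial σ K) {n r : ℕ} (x : σ → K) (γ : Fin r → ι)
    (p : Fin r → restrictTotalDegree σ K n) :
    eval x (of fun i j => bind₁ (F (γ j)) (p i : MvPolynomial σ K)).det =
      (of fun i j => restrictTotalDegreeEval n (fun γ k => eval x (F γ k)) (p i) (γ j)).det := by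
  rw [RingHom.map_det]
  congr 1
  ext i j
  simp only [RingHom.mapMatrix_apply, map_apply, of_apply, restrictTotalDegreeEval_apply]
  exact eval₂Hom_bind₁ _ _ _ _

theorem eval_eq_zero_of_mem_orbitMinors [Finite σ] {F : ι → σ → MvPolynomial σ K} {n r : ℕ}
    {x : σ → K}
    (hx : finrank K (LinearMap.range (restrictTotalDegreeEval n fun γ k => eval x (F γ k))) < r)
    {q : MvPolynomial σ K} (hq : q ∈ orbitMinors F n r) : eval x q = 0 := by
  obtain ⟨γ, p, rfl⟩ := hq
  rw [eval_det_bind₁]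
  by_contra hdet
  have hind := (linearIndependent_iff_exists_det_ne_zero _).2 ⟨γ, hdet⟩
  exact hx.not_ge (LinearMap.le_finrank_range_of_linearIndependent_comp hind)

theorem exists_mem_orbitMinors_eval_ne_zero [Finite σ] (F : ι → σ → MvPolynomial σ K) (n : ℕ)
    (x : σ → K) :
    ∃ q ∈ orbitMinors F n
        (finrank K (LinearMap.range (restrictTotalDegreeEval n fun γ k => eval x (F γ k)))),
      eval x q ≠ 0 := by
  obtain ⟨p, hp⟩ := LinearMap.exists_linearIndependent_comp
    (restrictTotalDegreeEval n fun γ k => eval x (F γ k))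
  obtain ⟨γ, hdet⟩ := (linearIndependent_iff_exists_det_ne_zero _).1 hp
  exact ⟨_, ⟨γ, p, rfl⟩, by rwa [eval_det_bind₁]⟩

end MvPolynomial

theorem nondense_orbits_in_countable_union_general
    {d : ℕ} {Γ : Type*} [Group Γ]
    (M : Set (Fin d → ℂ))
    -- `Γ` acts on `M` by automorphisms given by polynomial maps
    (act : Γ →* Equiv.Perm {x : Fin d → ℂ // x ∈ M})
    (halg : ∀ γ : Γ, ∃ F : Fin d → MvPolynomial (Fin d) ℂ,
      ∀ x : {x : Fin d → ℂ // x ∈ M},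
        ((act γ x : {x : Fin d → ℂ // x ∈ M}) : Fin d → ℂ) =
          fun i => eval (x : Fin d → ℂ) (F i))
    -- some point has a Zariski dense orbit
    (hdense : ∃ x : {x : Fin d → ℂ // x ∈ M}, ∀ p : MvPolynomial (Fin d) ℂ,
      (∀ γ : Γ, eval ((act γ x : {x : Fin d → ℂ // x ∈ M}) : Fin d → ℂ) p = 0) →
      ∀ y ∈ M, eval y p = 0) :
    -- then there is a countable family of proper closed subvarieties of `M`
    ∃ C : ℕ → Set (MvPolynomial (Fin d) ℂ),
      (∀ k : ℕ, ∃ x ∈ M, ∃ p ∈ C k, eval x p ≠ 0) ∧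
      -- containing every point whose orbit is not Zariski dense
      (∀ x : {x : Fin d → ℂ // x ∈ M},
        ¬ (∀ p : MvPolynomial (Fin d) ℂ,
            (∀ γ : Γ, eval ((act γ x : {x : Fin d → ℂ // x ∈ M}) : Fin d → ℂ) p = 0) →
            ∀ y ∈ M, eval y p = 0) →
        ∃ k : ℕ, ∀ p ∈ C k, eval (x : Fin d → ℂ) p = 0) := by
  obtain ⟨x₀, hx₀⟩ := hdense
  choose F hF using halg
  simp only [hF] at hx₀ ⊢
  refine ⟨fun n => orbitMinors F n (finrank ℂ (LinearMap.range
    (restrictTotalDegreeEval n fun γ k => eval (x₀ : Fin d → ℂ) (F γ k)))), fun n => ?_,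
    fun x hx => ?_⟩
  · obtain ⟨q, hq, hq₀⟩ := exists_mem_orbitMinors_eval_ne_zero F n (x₀ : Fin d → ℂ)
    exact ⟨x₀, x₀.2, q, hq, hq₀⟩
  · push Not at hx
    obtain ⟨p, hpx, y, hy, hpy⟩ := hx
    refine ⟨p.totalDegree, fun q hq => eval_eq_zero_of_mem_orbitMinors ?_ hq⟩
    refine finrank_range_restrictTotalDegreeEval_lt (fun q hq γ => ?_) hpx
      fun h => hpy (hx₀ p h y hy)
    rw [← hF γ x]
    exact hx₀ q hq _ (act γ x).2

/-- Let a finitely generated group `Γ` act by algebraic automorphisms on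
an irreducible affine complex variety `M ⊆ ℂ^d`, and suppose some point of `M` has a
Zariski dense `Γ`-orbit.  Then the set of points of `M` whose `Γ`-orbit is not Zariski
dense is contained in a countable union of proper closed subvarieties of `M`. -/
theorem nondense_orbits_in_countable_union
    {d : ℕ} {Γ : Type*} [Group Γ] (hΓ : Group.FG Γ)
    (M : Set (Fin d → ℂ))
    -- `M` is Zariski closed, cut out by the polynomials in `I`
    (I : Set (MvPolynomial (Fin d) ℂ))
    (hclosed : M = {x | ∀ p ∈ I, eval x p = 0})
    -- `M` is (reduced and) irreducible: nonempty with prime vanishing ideal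
    (hne : M.Nonempty)
    (hirr : ∀ p q : MvPolynomial (Fin d) ℂ,
      (∀ x ∈ M, eval x p * eval x q = 0) →
      (∀ x ∈ M, eval x p = 0) ∨ (∀ x ∈ M, eval x q = 0))
    -- `Γ` acts on `M` by automorphisms given by polynomial maps
    (act : Γ →* Equiv.Perm {x : Fin d → ℂ // x ∈ M})
    (halg : ∀ γ : Γ, ∃ F : Fin d → MvPolynomial (Fin d) ℂ,
      ∀ x : {x : Fin d → ℂ // x ∈ M},
        ((act γ x : {x : Fin d → ℂ // x ∈ M}) : Fin d → ℂ) =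
          fun i => eval (x : Fin d → ℂ) (F i))
    -- some point has a Zariski dense orbit
    (hdense : ∃ x : {x : Fin d → ℂ // x ∈ M}, ∀ p : MvPolynomial (Fin d) ℂ,
      (∀ γ : Γ, eval ((act γ x : {x : Fin d → ℂ // x ∈ M}) : Fin d → ℂ) p = 0) →
      ∀ y ∈ M, eval y p = 0) :
    -- then there is a countable family of proper closed subvarieties of `M`
    ∃ C : ℕ → Set (MvPolynomial (Fin d) ℂ),
      (∀ k : ℕ, ∃ x ∈ M, ∃ p ∈ C k, eval x p ≠ 0) ∧
      -- containing every point whose orbit is not Zariski dense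
      (∀ x : {x : Fin d → ℂ // x ∈ M},
        ¬ (∀ p : MvPolynomial (Fin d) ℂ,
            (∀ γ : Γ, eval ((act γ x : {x : Fin d → ℂ // x ∈ M}) : Fin d → ℂ) p = 0) →
            ∀ y ∈ M, eval y p = 0) →
        ∃ k : ℕ, ∀ p ∈ C k, eval (x : Fin d → ℂ) p = 0) :=
  nondense_orbits_in_countable_union_general M act halg hdense
end
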